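/- arXiv:1012.1400 — 3 statements merged into one kernel-verified Lean document; each statement's English description precedes it below -/
import Mathlib

section
/- Let ζ : ℝ⁺ → ℝ be C¹ with 0 < ζ'(μ) ≤ 1 and ζ'(μ) ≤ J/(2√μ) for all μ > 0 (constants J > 0). Then the electrostatic potential φ(r) := q₀ ∫_r^∞ ζ'(q₀²/(2s⁴)) s^{−2} ds is finite for all r ≥ 0 (including r = 0), monotone decreasing in r when q₀ > 0, and satisfies sgn(q₀)·φ(r) ≤ |q₀|/r for all r > 0. -/
/-!
The integrand `ζ'(q₀²/(2s⁴)) / s²` is positive, which gives the monotonicity. The bound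
`ζ' ≤ 1` dominates it by `s⁻²`, which is integrable at infinity and integrates to `1/r` over
`(r, ∞)`. Near `s = 0` the bound `ζ'(μ) ≤ J/(2√μ)` takes over: since `√μ = |q₀|/(√2 s²)`, it
cancels the `s⁻²` singularity exactly, so the integrand stays bounded and the potential is finite
at the origin.
-/

open Set Filter MeasureTheory

theorem Real.sign_mul_self_eq_abs (x : ℝ) : Real.sign x * x = |x| := by
  rcases lt_trichotomy x 0 with hx | rfl | hx
  · rw [Real.sign_of_neg hx, abs_of_neg hx]; ring
  · simp
  · rw [Real.sign_of_pos hx, abs_of_pos hx]; ring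

theorem integrableOn_Ioi_zero_of_bounded_of_le_rpow {f : ℝ → ℝ} {C p : ℝ} (hf : Measurable f)
    (hp : p < -1) (hbdd : ∀ s ∈ Ioc (0 : ℝ) 1, ‖f s‖ ≤ C)
    (hdecay : ∀ s ∈ Ioi (1 : ℝ), ‖f s‖ ≤ s ^ p) :
    IntegrableOn f (Ioi 0) := by
  rw [← Ioc_union_Ioi_eq_Ioi zero_le_one]
  refine IntegrableOn.union ?_ ?_
  · exact Integrable.mono' (integrableOn_const measure_Ioc_lt_top.ne) hf.aestronglyMeasurable
      ((ae_restrict_iff' measurableSet_Ioc).mpr (Eventually.of_forall hbdd))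
  · exact Integrable.mono' (integrableOn_Ioi_rpow_of_lt hp one_pos) hf.aestronglyMeasurable
      ((ae_restrict_iff' measurableSet_Ioi).mpr (Eventually.of_forall hdecay))

theorem antitoneOn_setIntegral_Ioi {μ : Measure ℝ} {f : ℝ → ℝ} {a : ℝ}
    (hf : IntegrableOn f (Ioi a) μ) (hnonneg : ∀ s ∈ Ioi a, 0 ≤ f s) :
    AntitoneOn (fun r => ∫ s in Ioi r, f s ∂μ) (Ici a) :=
  fun _ hr _ _ hrr' => setIntegral_mono_set (hf.mono_set (Ioi_subset_Ioi hr))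
    ((ae_restrict_iff' measurableSet_Ioi).mpr
      (Eventually.of_forall fun s hs => hnonneg s (mem_Ioi.mpr (lt_of_le_of_lt hr hs))))
    (Ioi_subset_Ioi hrr').eventuallyLE

theorem setIntegral_Ioi_le_inv_of_le_rpow_neg_two {f : ℝ → ℝ} {r : ℝ} (hr : 0 < r)
    (hf : IntegrableOn f (Ioi r)) (hle : ∀ s ∈ Ioi r, f s ≤ s ^ (-2 : ℝ)) :
    ∫ s in Ioi r, f s ≤ r⁻¹ :=
  calc ∫ s in Ioi r, f s ≤ ∫ s in Ioi r, s ^ (-2 : ℝ) :=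
        setIntegral_mono_on hf (integrableOn_Ioi_rpow_of_lt (by norm_num) hr) measurableSet_Ioi hle
    _ = r⁻¹ := by rw [integral_Ioi_rpow_of_lt (by norm_num) hr]; norm_num [Real.rpow_neg_one]

theorem sqrt_sq_div_two_mul_pow_four (q s : ℝ) :
    √(q ^ 2 / (2 * s ^ 4)) = |q| / (√2 * s ^ 2) := by
  rw [Real.sqrt_div' _ (by positivity), Real.sqrt_sq_eq_abs, Real.sqrt_mul zero_le_two,
    show s ^ 4 = (s ^ 2) ^ 2 by ring, Real.sqrt_sq (by positivity)]

noncomputable def potentialIntegrand (k : ℝ → ℝ) (q s : ℝ) : ℝ := k (q ^ 2 / (2 * s ^ 4)) / s ^ 2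

section potentialIntegrand

variable {k : ℝ → ℝ} {q s : ℝ}

theorem measurable_potentialIntegrand (hk : Measurable k) (q : ℝ) :
    Measurable (potentialIntegrand k q) := by
  unfold potentialIntegrand
  fun_prop

theorem potentialIntegrand_pos (hk : ∀ μ > 0, 0 < k μ) (hq : q ≠ 0) (hs : 0 < s) :
    0 < potentialIntegrand k q s :=
  div_pos (hk _ (by positivity)) (by positivity)

theorem potentialIntegrand_le_rpow_neg_two (hk : ∀ μ > 0, k μ ≤ 1) (hq : q ≠ 0) (hs : 0 < s) :
    potentialIntegrand k q s ≤ s ^ (-2 : ℝ) := by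
  rw [Real.rpow_neg hs.le, Real.rpow_two, potentialIntegrand]
  exact div_le_div_of_nonneg_right (hk _ (by positivity)) (by positivity) |>.trans_eq (one_div _)

theorem potentialIntegrand_le_const {J : ℝ} (hk : ∀ μ > 0, k μ ≤ J / (2 * √μ)) (hq : q ≠ 0)
    (hs : 0 < s) : potentialIntegrand k q s ≤ J * √2 / (2 * |q|) := by
  have hbound := hk _ (show 0 < q ^ 2 / (2 * s ^ 4) by positivity)
  rw [sqrt_sq_div_two_mul_pow_four] at hbound
  have : 0 < |q| := abs_pos.mpr hq
  calc potentialIntegrand k q s ≤ J / (2 * (|q| / (√2 * s ^ 2))) / s ^ 2 :=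
        div_le_div_of_nonneg_right hbound (by positivity)
    _ = J * √2 / (2 * |q|) := by field_simp

end potentialIntegrand

theorem stmt_10_general (ζ : ℝ → ℝ) (q₀ J : ℝ) (hq : q₀ ≠ 0)
    (hd : ∀ μ > 0, 0 < deriv ζ μ ∧ deriv ζ μ ≤ 1 ∧ deriv ζ μ ≤ J / (2 * Real.sqrt μ)) :
    (∀ r ≥ 0, IntegrableOn (fun s => deriv ζ (q₀^2 / (2 * s^4)) / s^2) (Ioi r)) ∧
    (0 < q₀ → AntitoneOn (fun r => q₀ * ∫ s in Ioi r, deriv ζ (q₀^2 / (2 * s^4)) / s^2) (Ici 0)) ∧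
    (∀ r > 0, Real.sign q₀ * (q₀ * ∫ s in Ioi r, deriv ζ (q₀^2 / (2 * s^4)) / s^2)
      ≤ |q₀| / r) := by
  have hpos s (hs : 0 < s) : 0 < potentialIntegrand (deriv ζ) q₀ s :=
    potentialIntegrand_pos (fun μ hμ => (hd μ hμ).1) hq hs
  have hle s (hs : 0 < s) : potentialIntegrand (deriv ζ) q₀ s ≤ s ^ (-2 : ℝ) :=
    potentialIntegrand_le_rpow_neg_two (fun μ hμ => (hd μ hμ).2.1) hq hs
  have hint : IntegrableOn (potentialIntegrand (deriv ζ) q₀) (Ioi 0) :=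
    integrableOn_Ioi_zero_of_bounded_of_le_rpow
      (measurable_potentialIntegrand (measurable_deriv ζ) q₀) (by norm_num : (-2 : ℝ) < -1)
      (fun s hs => (Real.norm_of_nonneg (hpos s hs.1).le).trans_le
        (potentialIntegrand_le_const (fun μ hμ => (hd μ hμ).2.2) hq hs.1))
      (fun s hs => (Real.norm_of_nonneg (hpos s (one_pos.trans hs)).le).trans_le
        (hle s (one_pos.trans hs)))
  refine ⟨fun r hr => hint.mono_set (Ioi_subset_Ioi hr), fun hq₀ a ha b hb hab => ?_,
    fun r hr => ?_⟩
  · exact mul_le_mul_of_nonneg_left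
      (antitoneOn_setIntegral_Ioi hint (fun s hs => (hpos s hs).le) ha hb hab) hq₀.le
  · rw [← mul_assoc, Real.sign_mul_self_eq_abs, div_eq_mul_inv]
    exact mul_le_mul_of_nonneg_left (setIntegral_Ioi_le_inv_of_le_rpow_neg_two hr
      (hint.mono_set (Ioi_subset_Ioi hr.le)) fun s hs => hle s (hr.trans hs)) (abs_nonneg q₀)

theorem stmt_10 (ζ : ℝ → ℝ) (q₀ J : ℝ) (hq : q₀ ≠ 0) (hJ : 0 < J)
    (hC1 : ContDiffOn ℝ 1 ζ (Ioi 0))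
    (hd : ∀ μ > 0, 0 < deriv ζ μ ∧ deriv ζ μ ≤ 1 ∧ deriv ζ μ ≤ J / (2 * Real.sqrt μ)) :
    (∀ r ≥ 0, IntegrableOn (fun s => deriv ζ (q₀^2 / (2 * s^4)) / s^2) (Ioi r)) ∧
    (0 < q₀ → AntitoneOn (fun r => q₀ * ∫ s in Ioi r, deriv ζ (q₀^2 / (2 * s^4)) / s^2) (Ici 0)) ∧
    (∀ r > 0, Real.sign q₀ * (q₀ * ∫ s in Ioi r, deriv ζ (q₀^2 / (2 * s^4)) / s^2)
      ≤ |q₀| / r) :=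
  stmt_10_general ζ q₀ J hq hd
end

section
/- Let ζ : ℝ⁺ → ℝ satisfy ζ(μ) = μ + O(μ^{5/4}) as μ → 0⁺ and ∫₀^∞ μ^{-7/4}|ζ(μ)| dμ < ∞. Then the mass function m(r) = M − ∫_r^∞ ζ(q₀²/(2s⁴)) s² ds satisfies m(r) = M − q₀²/(2r) + O(r^{−2}) as r → ∞, and hence e^ξ(r) = 1 − 2M/r + q₀²/r² + O(r^{−3}). -/
/-!
Near spatial infinity the argument μ = q₀²/(2s⁴) of ζ tends to 0, so the Maxwellian limit
ζ(μ) = μ + O(μ^{5/4}) makes the integrand ζ(μ)s² equal to (q₀²/2)s⁻² + O(s⁻³). Integrating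
over (r, ∞) gives q₀²/(2r) + O(r⁻²) for the mass defect, and dividing by r gives the
expansion of e^ξ = 1 - 2m/r.
-/

open Set MeasureTheory

lemma abs_setIntegral_Ioi_sub_le_of_abs_sub_rpow_le {f : ℝ → ℝ} {r c K a b : ℝ}
    (hr : 0 < r) (ha : a < -1) (hb : b < -1)
    (hf : AEStronglyMeasurable f (volume.restrict (Ioi r)))
    (hbd : ∀ s ∈ Ioi r, |f s - c * s ^ a| ≤ K * s ^ b) :
    |(∫ s in Ioi r, f s) - c * (-r ^ (a + 1) / (a + 1))| ≤ K * (-r ^ (b + 1) / (b + 1)) := by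
  have hmain : IntegrableOn (fun s ↦ c * s ^ a) (Ioi r) :=
    (integrableOn_Ioi_rpow_of_lt ha hr).const_mul c
  have hdom : IntegrableOn (fun s ↦ K * s ^ b) (Ioi r) :=
    (integrableOn_Ioi_rpow_of_lt hb hr).const_mul K
  have hbd_ae : ∀ᵐ s ∂volume.restrict (Ioi r), ‖f s - c * s ^ a‖ ≤ K * s ^ b :=
    (ae_restrict_iff' measurableSet_Ioi).2 (.of_forall hbd)
  have herr : IntegrableOn (fun s ↦ f s - c * s ^ a) (Ioi r) :=
    hdom.mono' (hf.sub hmain.aestronglyMeasurable) hbd_ae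
  have hf_int : IntegrableOn f (Ioi r) := by
    simpa only [Pi.add_def, sub_add_cancel] using herr.add hmain
  calc |(∫ s in Ioi r, f s) - c * (-r ^ (a + 1) / (a + 1))|
      = ‖∫ s in Ioi r, (f s - c * s ^ a)‖ := by
        rw [integral_sub hf_int hmain, integral_const_mul, integral_Ioi_rpow_of_lt ha hr,
          Real.norm_eq_abs]
    _ ≤ ∫ s in Ioi r, K * s ^ b := norm_integral_le_of_norm_le hdom hbd_ae
    _ = K * (-r ^ (b + 1) / (b + 1)) := by
        rw [integral_const_mul, integral_Ioi_rpow_of_lt hb hr]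

lemma div_pow_four_rpow_five_div_four {a s : ℝ} (ha : 0 ≤ a) (hs : 0 < s) :
    (a / s ^ 4) ^ ((5 : ℝ) / 4) = a ^ ((5 : ℝ) / 4) * s ^ (-5 : ℝ) := by
  rw [Real.div_rpow ha (by positivity), ← Real.rpow_natCast s 4, ← Real.rpow_mul hs.le,
    div_eq_mul_inv, ← Real.rpow_neg hs.le]
  norm_num

lemma abs_mul_sq_sub_le_of_abs_sub_le {x a s C₀ : ℝ} (ha : 0 ≤ a) (hs : 0 < s)
    (h : |x - a / s ^ 4| ≤ C₀ * (a / s ^ 4) ^ ((5 : ℝ) / 4)) :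
    |x * s ^ 2 - a * s ^ (-2 : ℝ)| ≤ C₀ * a ^ ((5 : ℝ) / 4) * s ^ (-3 : ℝ) := by
  have hs2 : a * s ^ (-2 : ℝ) = a / s ^ 4 * s ^ 2 := by
    rw [Real.rpow_neg hs.le, Real.rpow_two]; field_simp
  have hs3 : s ^ (-3 : ℝ) = s ^ (-5 : ℝ) * s ^ 2 := by
    rw [← Real.rpow_natCast, ← Real.rpow_add hs]; norm_num
  rw [div_pow_four_rpow_five_div_four ha hs] at h
  calc |x * s ^ 2 - a * s ^ (-2 : ℝ)| = |x - a / s ^ 4| * s ^ 2 := by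
        rw [hs2, ← sub_mul, abs_mul, abs_sq]
    _ ≤ C₀ * (a ^ ((5 : ℝ) / 4) * s ^ (-5 : ℝ)) * s ^ 2 := by gcongr
    _ = C₀ * a ^ ((5 : ℝ) / 4) * s ^ (-3 : ℝ) := by rw [hs3]; ring

lemma abs_setIntegral_Ioi_comp_div_pow_four_sub_le {ζ : ℝ → ℝ} {a C₀ μ₁ r : ℝ}
    (hcont : ContinuousOn ζ (Ioi 0)) (ha : 0 < a) (hμ₁ : 0 < μ₁)
    (hζ : ∀ μ ∈ Ioo 0 μ₁, |ζ μ - μ| ≤ C₀ * μ ^ ((5 : ℝ) / 4)) (hr : max 1 (a / μ₁) ≤ r) :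
    |(∫ s in Ioi r, ζ (a / s ^ 4) * s ^ 2) - a / r| ≤ C₀ * a ^ ((5 : ℝ) / 4) / (2 * r ^ 2) := by
  have hr0 : 0 < r := one_pos.trans_le (le_of_max_le_left hr)
  have hμ : ∀ s ∈ Ioi r, a / s ^ 4 ∈ Ioo 0 μ₁ := by
    intro s (hs : r < s)
    have hs0 : 0 < s := hr0.trans hs
    have hs_pow : a / μ₁ < s ^ 4 :=
      calc a / μ₁ ≤ r := le_of_max_le_right hr
        _ < s := hs
        _ ≤ s ^ 4 := le_self_pow₀ (by linarith [le_of_max_le_left hr]) (by norm_num)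
    exact ⟨by positivity, (div_lt_comm₀ (by positivity) hμ₁).2 hs_pow⟩
  have hmeas : AEStronglyMeasurable (fun s ↦ ζ (a / s ^ 4) * s ^ 2) (volume.restrict (Ioi r)) := by
    refine ContinuousOn.aestronglyMeasurable ?_ measurableSet_Ioi
    refine (hcont.comp ?_ fun s hs ↦ (hμ s hs).1).mul (continuous_pow 2).continuousOn
    exact continuousOn_const.div (by fun_prop) fun s (hs : r < s) ↦ by
      have := hr0.trans hs; positivity
  have herr := abs_setIntegral_Ioi_sub_le_of_abs_sub_rpow_le hr0 (by norm_num) (by norm_num) hmeas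
    fun s hs ↦ abs_mul_sq_sub_le_of_abs_sub_le ha.le (hr0.trans hs) (hζ _ (hμ s hs))
  convert herr using 2
  · rw [show (-2 : ℝ) + 1 = -1 by norm_num, Real.rpow_neg_one]; field_simp
  · rw [show (-3 : ℝ) + 1 = -2 by norm_num, Real.rpow_neg hr0.le, Real.rpow_two]; field_simp

theorem stmt_12_general (ζ : ℝ → ℝ) (M q₀ : ℝ) (hq : q₀ ≠ 0)
    (hcont : ContinuousOn ζ (Ioi 0))
    (hweak : ∃ C₀ > 0, ∃ μ₁ > 0, ∀ μ ∈ Ioo 0 μ₁, |ζ μ - μ| ≤ C₀ * μ ^ ((5:ℝ)/4)) :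
    ∃ C > 0, ∃ R > 0, ∀ r ≥ R,
      |(M - ∫ s in Ioi r, ζ (q₀^2 / (2 * s^4)) * s^2) - (M - q₀^2 / (2 * r))| ≤ C / r^2 ∧
      |(1 - 2 * (M - ∫ s in Ioi r, ζ (q₀^2 / (2 * s^4)) * s^2) / r)
        - (1 - 2 * M / r + q₀^2 / r^2)| ≤ C / r^3 := by
  obtain ⟨C₀, hC₀, μ₁, hμ₁, hζ⟩ := hweak
  have ha : 0 < q₀ ^ 2 / 2 := by positivity
  refine ⟨C₀ * (q₀ ^ 2 / 2) ^ ((5 : ℝ) / 4), by positivity, max 1 (q₀ ^ 2 / 2 / μ₁),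
    by positivity, fun r hr ↦ ?_⟩
  have hr0 : 0 < r := one_pos.trans_le (le_of_max_le_left hr)
  have herr := abs_setIntegral_Ioi_comp_div_pow_four_sub_le hcont ha hμ₁ hζ hr
  simp only [div_div] at herr
  set I := ∫ s in Ioi r, ζ (q₀ ^ 2 / (2 * s ^ 4)) * s ^ 2
  set K := C₀ * (q₀ ^ 2 / 2) ^ ((5 : ℝ) / 4)
  constructor
  · calc |(M - I) - (M - q₀ ^ 2 / (2 * r))| = |I - q₀ ^ 2 / (2 * r)| := by
          rw [← abs_neg]; congr 1; ring
      _ ≤ K / (2 * r ^ 2) := herr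
      _ ≤ K / r ^ 2 := by gcongr; linarith [sq_nonneg r]
  · calc |(1 - 2 * (M - I) / r) - (1 - 2 * M / r + q₀ ^ 2 / r ^ 2)|
          = 2 / r * |I - q₀ ^ 2 / (2 * r)| := by
          rw [← abs_of_pos (show 0 < 2 / r by positivity), ← abs_mul]; congr 1; field_simp; ring
      _ ≤ 2 / r * (K / (2 * r ^ 2)) := by gcongr
      _ = K / r ^ 3 := by field_simp

theorem stmt_12 (ζ : ℝ → ℝ) (M q₀ : ℝ) (hq : q₀ ≠ 0)
    (hcont : ContinuousOn ζ (Ioi 0))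
    (hweak : ∃ C₀ > 0, ∃ μ₁ > 0, ∀ μ ∈ Ioo 0 μ₁, |ζ μ - μ| ≤ C₀ * μ ^ ((5:ℝ)/4))
    (hint : IntegrableOn (fun μ => μ ^ (-(7:ℝ)/4) * |ζ μ|) (Ioi 0)) :
    ∃ C > 0, ∃ R > 0, ∀ r ≥ R,
      |(M - ∫ s in Ioi r, ζ (q₀^2 / (2 * s^4)) * s^2) - (M - q₀^2 / (2 * r))| ≤ C / r^2 ∧
      |(1 - 2 * (M - ∫ s in Ioi r, ζ (q₀^2 / (2 * s^4)) * s^2) / r)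
        - (1 - 2 * M / r + q₀^2 / r^2)| ≤ C / r^3 :=
  stmt_12_general ζ M q₀ hq hcont hweak
end

section
/- For null geodesics (𝔪 = 0) with angular momentum Φ > 0 in the metric −e^ξ dt² + e^{−ξ} dr² + r² dΩ², where f(x) := x² e^{ξ(M/x)} (x = M/r) is continuous and strictly monotone increasing on (0,∞) with f(0⁺) = 0 and f(x) → ∞, for every δ > 0 there exists a unique x₀ > 0 with f(x₀) = δ², and along the geodesic with energy parameter δ = ME/Φ one has x < x₀ (i.e. r > r₀ = M/x₀): the geodesic has a perihelion and never reaches r = 0. -/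
open Set Filter

theorem stmt_18 (f : ℝ → ℝ) (δ : ℝ) (hδ : 0 < δ)
    (hf : ContinuousOn f (Ioi 0)) (hmono : StrictMonoOn f (Ioi 0))
    (hf0 : Tendsto f (nhdsWithin 0 (Ioi 0)) (nhds 0))
    (hftop : Tendsto f atTop atTop)
    (x : ℝ → ℝ) (hx : ∀ s, 0 < x s) (hgeo : ∀ s, f (x s) ≤ δ^2) :
    ∃ x₀ > 0, f x₀ = δ^2 ∧ (∀ y > 0, f y = δ^2 → y = x₀) ∧ ∀ s, x s ≤ x₀ := by
  have hδ2 : (0:ℝ) < δ^2 := by positivity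
  -- find a > 0 with f a < δ²
  have hA : ∀ᶠ y in nhdsWithin 0 (Ioi 0), f y < δ^2 :=
    hf0.eventually (Filter.Tendsto.eventually_lt_const hδ2 tendsto_id)
  obtain ⟨a, ha, hfa⟩ : ∃ a ∈ Ioi (0:ℝ), f a < δ^2 := by
    have := (hA.and self_mem_nhdsWithin).exists
    obtain ⟨a, h1, h2⟩ := this
    exact ⟨a, h2, h1⟩
  -- find b > a with f b > δ²
  obtain ⟨b, hab, hfb⟩ : ∃ b, a < b ∧ δ^2 < f b := by
    have := ((hftop.eventually (eventually_gt_atTop (δ^2))).and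
      (eventually_gt_atTop a)).exists
    obtain ⟨b, h1, h2⟩ := this
    exact ⟨b, h2, h1⟩
  have hsub : Icc a b ⊆ Ioi 0 := fun y hy => lt_of_lt_of_le ha hy.1
  have hivt := intermediate_value_Icc (le_of_lt hab) (hf.mono hsub)
  obtain ⟨x₀, hx₀mem, hfx₀⟩ := hivt ⟨le_of_lt hfa, le_of_lt hfb⟩
  have hx₀pos : 0 < x₀ := lt_of_lt_of_le ha hx₀mem.1
  refine ⟨x₀, hx₀pos, hfx₀, ?_, ?_⟩
  · intro y hy hfy
    rcases lt_trichotomy y x₀ with h | h | h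
    · exact absurd (hmono hy hx₀pos h) (by rw [hfy, hfx₀]; exact lt_irrefl _)
    · exact h
    · exact absurd (hmono hx₀pos hy h) (by rw [hfy, hfx₀]; exact lt_irrefl _)
  · intro s
    by_contra h
    push_neg at h
    exact absurd (hmono hx₀pos (hx s) h) (by rw [hfx₀]; exact not_lt.2 (hgeo s))
end
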